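/- Let α ∈ (0,2) and n ∈ ℕ. For every function f : Λ_n → ℝ with ∑_{x∈Λ_n} f(x) = 0, one has ∑_{x∈Λ_n} f(x)² ≤ ((2n+1)^α / 2) ∑_{x,y∈Λ_n, x≠y} |y-x|^{-(1+α)} (f(y) - f(x))². In particular, the spectral gap of the random walk on Λ_n with transition rate q(z) = |z|^{-(1+α)} is at least (1/2)(2n+1)^{-α}. -/

import Mathlib

/-!
For a mean-zero `f` on a finite set of size `N`, expanding the square gives
`∑ₓ ∑ᵧ (f y - f x)² = 2 N ∑ₓ f x²`. On `Λ_n` every off-diagonal rate `|y - x|^{-(1+α)}` is at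
least `(2n+1)^{-(1+α)}`, since `|y - x| ≤ 2n`, so the Dirichlet form dominates
`2 (2n+1)^{-α} ∑ₓ f x²`.
-/

open Finset

theorem sum_sum_sub_sq_of_sum_eq_zero {ι : Type*} (s : Finset ι) (f : ι → ℝ)
    (hf : ∑ x ∈ s, f x = 0) :
    ∑ x ∈ s, ∑ y ∈ s, (f y - f x) ^ 2 = 2 * #s * ∑ x ∈ s, f x ^ 2 := by
  have hexpand : ∀ x ∈ s, ∑ y ∈ s, (f y - f x) ^ 2
      = ∑ y ∈ s, f y ^ 2 + #s * f x ^ 2 - 2 * f x * ∑ y ∈ s, f y := by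
    intro x _
    rw [mul_sum, ← nsmul_eq_mul, ← sum_const, ← sum_add_distrib, ← sum_sub_distrib]
    exact sum_congr rfl fun y _ => by ring
  rw [sum_congr rfl hexpand, hf]
  simp only [mul_zero, sub_zero, sum_add_distrib, sum_const, nsmul_eq_mul, ← mul_sum]
  ring

theorem poincare_of_le_offDiag_weight {ι : Type*} [DecidableEq ι] (s : Finset ι) (f : ι → ℝ)
    (hf : ∑ x ∈ s, f x = 0) (w : ι → ι → ℝ) (c : ℝ)
    (hw : ∀ x ∈ s, ∀ y ∈ s, x ≠ y → c ≤ w x y) :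
    2 * c * #s * ∑ x ∈ s, f x ^ 2 ≤
      ∑ x ∈ s, ∑ y ∈ s, if x = y then 0 else w x y * (f y - f x) ^ 2 := by
  calc 2 * c * #s * ∑ x ∈ s, f x ^ 2 = ∑ x ∈ s, ∑ y ∈ s, c * (f y - f x) ^ 2 := by
        simp only [← mul_sum, sum_sum_sub_sq_of_sum_eq_zero s f hf]; ring
    _ ≤ _ := by
      refine sum_le_sum fun x hx => sum_le_sum fun y hy => ?_
      split_ifs with hxy
      · simp [hxy]
      · exact mul_le_mul_of_nonneg_right (hw x hx y hy hxy) (sq_nonneg _)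

theorem card_Icc_neg_self (n : ℕ) : (#(Icc (-(n : ℤ)) n) : ℝ) = 2 * n + 1 := by
  rw [Int.card_Icc, show ((n : ℤ) + 1 - -(n : ℤ)).toNat = 2 * n + 1 by omega]
  push_cast
  ring

theorem abs_sub_le_of_mem_Icc_neg_self {n : ℕ} {x y : ℤ} (hx : x ∈ Icc (-(n : ℤ)) n)
    (hy : y ∈ Icc (-(n : ℤ)) n) : |(y : ℝ) - x| ≤ 2 * n := by
  rw [mem_Icc] at hx hy
  have : |y - x| ≤ 2 * (n : ℤ) := abs_le.mpr ⟨by omega, by omega⟩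
  exact_mod_cast this

theorem rpow_neg_le_rpow_neg_abs_sub {α : ℝ} (hα : -1 ≤ α) {n : ℕ} {x y : ℤ}
    (hx : x ∈ Icc (-(n : ℤ)) n) (hy : y ∈ Icc (-(n : ℤ)) n) (hxy : x ≠ y) :
    (2 * (n : ℝ) + 1) ^ (-(1 + α)) ≤ |(y : ℝ) - x| ^ (-(1 + α)) := by
  have hpos : 0 < |(y : ℝ) - x| := abs_pos.mpr (sub_ne_zero.mpr (by exact_mod_cast hxy.symm))
  exact Real.rpow_le_rpow_of_nonpos hpos
    (by linarith [abs_sub_le_of_mem_Icc_neg_self hx hy]) (by linarith)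

theorem spectral_gap_lower_bound_stable_rates_general
    (α : ℝ) (hα0 : 0 < α) (n : ℕ)
    (f : ℤ → ℝ) (hf : (∑ x ∈ Finset.Icc (-(n : ℤ)) n, f x) = 0) :
    ∑ x ∈ Finset.Icc (-(n : ℤ)) n, (f x) ^ 2 ≤
      ((2 * (n : ℝ) + 1) ^ α / 2) *
        ∑ x ∈ Finset.Icc (-(n : ℤ)) n, ∑ y ∈ Finset.Icc (-(n : ℤ)) n,
          if x = y then 0 else |(y : ℝ) - (x : ℝ)| ^ (-(1 + α)) * (f y - f x) ^ 2 := by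
  set N : ℝ := 2 * n + 1
  have hN : 0 < N := by positivity
  have hpoincare := poincare_of_le_offDiag_weight _ f hf (fun x y => |(y : ℝ) - x| ^ (-(1 + α)))
    (N ^ (-(1 + α))) fun x hx y hy hxy => rpow_neg_le_rpow_neg_abs_sub (by linarith) hx hy hxy
  rw [card_Icc_neg_self] at hpoincare
  have hconst : N ^ α / 2 * (2 * N ^ (-(1 + α)) * N) = 1 := by
    rw [neg_add, Real.rpow_add hN, Real.rpow_neg_one, Real.rpow_neg hN.le]
    field_simp
  calc ∑ x ∈ Icc (-(n : ℤ)) n, f x ^ 2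
      = N ^ α / 2 * (2 * N ^ (-(1 + α)) * N * ∑ x ∈ Icc (-(n : ℤ)) n, f x ^ 2) := by
        rw [← mul_assoc, hconst, one_mul]
    _ ≤ _ := mul_le_mul_of_nonneg_left hpoincare (by positivity)

theorem spectral_gap_lower_bound_stable_rates
    (α : ℝ) (hα0 : 0 < α) (hα2 : α < 2) (n : ℕ) (hn : 1 ≤ n)
    (f : ℤ → ℝ) (hf : (∑ x ∈ Finset.Icc (-(n : ℤ)) n, f x) = 0) :
    ∑ x ∈ Finset.Icc (-(n : ℤ)) n, (f x) ^ 2 ≤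
      ((2 * (n : ℝ) + 1) ^ α / 2) *
        ∑ x ∈ Finset.Icc (-(n : ℤ)) n, ∑ y ∈ Finset.Icc (-(n : ℤ)) n,
          if x = y then 0 else |(y : ℝ) - (x : ℝ)| ^ (-(1 + α)) * (f y - f x) ^ 2 :=
  spectral_gap_lower_bound_stable_rates_general α hα0 n f hf
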